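/- Let (C,V) be the fallback voting election obtained by Construction 1 from a Hitting Set instance (B,S,k), and let D ⊆ B ∪ {d,w}. If c is not a unique FV winner of the restricted election (D ∪ {c}, V), then there exists a set B' ⊆ B such that (a) D = B' ∪ {d,w}, (b) w is the unique FV winner of (B' ∪ {c,d,w}, V), and (c) B' is a hitting set for S with ||B'|| ≤ k. -/

import Mathlib

/-!
Fallback voting (Brams and Sanver).  A vote is represented by the list of the
candidates the voter approves of, in order of preference (most preferred
first); all candidates not occurring in the list are disapproved.  The voter
collection is a multiset of such votes.
-/

namespace FV

variable {α : Type} [DecidableEq α]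

/-- The level-`i` score of candidate `c` in the election with votes `V`:
the number of voters who approve of `c` and rank `c` among their top `i`
approved candidates. -/
def levelScore (V : Multiset (List α)) (i : ℕ) (c : α) : ℕ :=
  (V.filter (fun v => c ∈ v.take i)).card

/-- The approval score of candidate `c`: the number of voters approving of `c`. -/
def apprScore (V : Multiset (List α)) (c : α) : ℕ :=
  (V.filter (fun v => c ∈ v)).card

/-- Restriction of the votes to the candidate set `C`: each voter's approval
set and ranking are restricted to `C`. -/
def restrict (C : Finset α) (V : Multiset (List α)) : Multiset (List α) :=
  V.map (fun v => v.filter (fun x => decide (x ∈ C)))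

instance instDecMaj (C : Finset α) (V : Multiset (List α)) :
    DecidablePred (fun i =>
      i ∈ Finset.Icc 1 C.card ∧ ∃ c ∈ C, 2 * levelScore V i c > Multiset.card V) :=
  fun _ => inferInstance

/-- The set of fallback-voting winners of the election `(C,V)`:
if some level `i` with `1 ≤ i ≤ ‖C‖` exists at which some candidate of `C`
has a strict majority (level-`i` score exceeding `‖V‖/2`), then the winners
are the candidates with the largest level-`i₀` score, where `i₀` is the
smallest such level; otherwise the winners are the candidates with the largest
approval score. -/
def winners (C : Finset α) (V : Multiset (List α)) : Finset α :=
  if h : ∃ i, i ∈ Finset.Icc 1 C.card ∧ ∃ c ∈ C, 2 * levelScore V i c > Multiset.card V then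
    C.filter (fun c => ∀ d ∈ C, levelScore V (Nat.find h) d ≤ levelScore V (Nat.find h) c)
  else
    C.filter (fun c => ∀ d ∈ C, apprScore V d ≤ apprScore V c)

/-- The FV winners of the election `(C,V)` restricted to the candidate set `C`. -/
def fwinners (C : Finset α) (V : Multiset (List α)) : Finset α :=
  winners C (restrict C V)

end FV

/-! ### Construction 1 from a Hitting Set instance `(B, S, k)` -/

/-- Candidates of Construction 1: the elements of `B = {b_0, …, b_{m-1}}`
together with the three candidates `c`, `d`, and `w`. -/
inductive CandA (m : ℕ) where
  | b (j : Fin m)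
  | c
  | d
  | w
deriving DecidableEq

/-- The elements of a subset `T ⊆ B`, ranked according to the fixed linear
order on `B`. -/
def blistA {m : ℕ} (T : Finset (Fin m)) : List (CandA m) :=
  (T.sort (· ≤ ·)).map CandA.b

/-- The candidate set `C = B ∪ {c, d, w}` of Construction 1. -/
def CA (m : ℕ) : Finset (CandA m) :=
  (Finset.univ : Finset (Fin m)).image CandA.b ∪ {CandA.c, CandA.d, CandA.w}

/-- The voter collection of Construction 1:
`2m+1` voters `c | B∪{d,w}`; `2n+2k(n−1)+3` voters `c w | B∪{d}`;
`2n(k+1)+5` voters `w c | B∪{d}`; for each `i`, `2(k+1)` voters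
`d S_i c | (B−S_i)∪{w}`; for each `j`, two voters `d b_j w | (B−{b_j})∪{c}`;
and `2(k+1)` voters `d w c | B`. -/
def VA (m n k : ℕ) (S : Fin n → Finset (Fin m)) : Multiset (List (CandA m)) :=
  Multiset.replicate (2*m+1) [CandA.c] +
  Multiset.replicate (2*n + 2*k*(n-1) + 3) [CandA.c, CandA.w] +
  Multiset.replicate (2*n*(k+1) + 5) [CandA.w, CandA.c] +
  (∑ i : Fin n, Multiset.replicate (2*(k+1)) ([CandA.d] ++ blistA (S i) ++ [CandA.c])) +
  (∑ j : Fin m, Multiset.replicate 2 [CandA.d, CandA.b j, CandA.w]) +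
  Multiset.replicate (2*(k+1)) [CandA.d, CandA.w, CandA.c]

/-!
In every election `(D ∪ {c}, V)` the outcome is decided at level 1 or 2. Without `w`, more than
half of the voters rank `c` first. With `w` but without `d`, `c` also collects the `d w c` voters
and wins at level 2, one vote ahead of `w`. With both `d` and `w` nobody has a majority at level 1,
and at level 2, writing `B' = D ∩ B`, the score of `c` exceeds its base value by `2(k+1)` for each
`S_i` missed by `B'`, while that of `w` falls by `2` for each element of `B'`; so `w` beats `c`
exactly when `B'` hits every `S_i` and `‖B'‖ ≤ k`.
-/

theorem Multiset.countP_replicate {β : Type} (p : β → Prop) [DecidablePred p] (r : ℕ)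
    (v : β) :
    (Multiset.replicate r v).countP p = if p v then r else 0 := by
  rw [← Multiset.coe_replicate, Multiset.coe_countP, List.countP_replicate]
  simp only [decide_eq_true_eq]

theorem List.not_mem_take_filter {β : Type} {x : β} {l : List β} (h : x ∉ l) (p : β → Bool)
    (i : ℕ) : x ∉ (l.filter p).take i :=
  fun hx => h (List.mem_of_mem_filter (List.take_subset _ _ hx))

theorem List.mem_take_one_append_singleton_iff {β : Type} {x : β} {l : List β} (hx : x ∉ l) :
    x ∈ (l ++ [x]).take 1 ↔ l = [] := by
  cases l with
  | nil => simp
  | cons a l => simpa using fun h : x = a => hx (h ▸ List.mem_cons_self)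

theorem Fintype.sum_ite_le_card_mul {ι : Type} [Fintype ι] (p : ι → Prop) [DecidablePred p]
    (a : ℕ) : (∑ i, if p i then a else 0) ≤ Fintype.card ι * a := by
  simpa using Finset.sum_le_card_nsmul Finset.univ _ a fun i _ => by split <;> omega

theorem Finset.filter_forall_le_eq_singleton {β : Type} [DecidableEq β] {C : Finset β}
    {f : β → ℕ} {x : β} (hx : x ∈ C) (hlt : ∀ y ∈ C, y ≠ x → f y < f x) :
    C.filter (fun c => ∀ d ∈ C, f d ≤ f c) = {x} := by
  refine Finset.eq_singleton_iff_unique_mem.2 ⟨Finset.mem_filter.2 ⟨hx, fun y hy => ?_⟩, ?_⟩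
  · rcases eq_or_ne y x with rfl | hyx
    · exact le_rfl
    · exact (hlt y hy hyx).le
  · intro y hy
    obtain ⟨hyC, hmax⟩ := Finset.mem_filter.1 hy
    by_contra hyx
    exact (hlt y hyC hyx).not_ge (hmax x hx)

namespace FV

variable {α : Type} [DecidableEq α]

theorem levelScore_restrict (C : Finset α) (V : Multiset (List α)) (i : ℕ) (x : α) :
    levelScore (restrict C V) i x
      = (V.filter fun v => x ∈ (v.filter fun y => decide (y ∈ C)).take i).card := by
  rw [levelScore, restrict, ← Multiset.countP_eq_card_filter, Multiset.countP_map]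

theorem levelScore_restrict_le_apprScore (C : Finset α) (V : Multiset (List α)) (i : ℕ)
    (x : α) : levelScore (restrict C V) i x ≤ apprScore V x := by
  rw [levelScore_restrict, apprScore]
  refine Multiset.card_le_card (Multiset.monotone_filter_right V fun v hv => ?_)
  exact List.mem_of_mem_filter (List.take_subset _ _ hv)

theorem card_restrict (C : Finset α) (V : Multiset (List α)) :
    Multiset.card (restrict C V) = Multiset.card V :=
  Multiset.card_map _ _

/-- The first level with a majority is at most `i`; if it is below `i`, `x` is the only
candidate that can hold the majority there, so `x` leads strictly at that level as well. -/
theorem winners_eq_singleton_of_majority {C : Finset α} {V : Multiset (List α)} {x : α}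
    {i : ℕ} (hx : x ∈ C) (hi : 1 ≤ i) (hiC : i ≤ C.card)
    (hmaj : Multiset.card V < 2 * levelScore V i x)
    (hlead : ∀ y ∈ C, y ≠ x → levelScore V i y < levelScore V i x)
    (hearly : ∀ j, 1 ≤ j → j < i → ∀ y ∈ C, y ≠ x → 2 * levelScore V j y ≤ Multiset.card V) :
    winners C V = {x} := by
  have hi' : i ∈ Finset.Icc 1 C.card := Finset.mem_Icc.2 ⟨hi, hiC⟩
  have h : ∃ i, i ∈ Finset.Icc 1 C.card ∧ ∃ c ∈ C, 2 * levelScore V i c > Multiset.card V :=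
    ⟨i, hi', x, hx, hmaj⟩
  rw [winners, dif_pos h]
  refine Finset.filter_forall_le_eq_singleton hx ?_
  obtain ⟨hfind, z, hz, hzmaj⟩ := Nat.find_spec h
  rcases (Nat.find_min' h ⟨hi', x, hx, hmaj⟩).eq_or_lt with hfi | hfi
  · rw [hfi]
    exact hlead
  · have hj := (Finset.mem_Icc.1 hfind).1
    obtain rfl : z = x := by
      by_contra hzx
      exact (hearly _ hj hfi z hz hzx).not_gt hzmaj
    intro y hy hyz
    have := hearly _ hj hfi y hy hyz
    omega

end FV

section Construction1

open FV

variable {m n k : ℕ} {S : Fin n → Finset (Fin m)}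

theorem card_filter_VA (p : List (CandA m) → Prop) [DecidablePred p] :
    ((VA m n k S).filter p).card =
      (if p [CandA.c] then 2*m+1 else 0)
      + (if p [CandA.c, CandA.w] then 2*n + 2*k*(n-1) + 3 else 0)
      + (if p [CandA.w, CandA.c] then 2*n*(k+1) + 5 else 0)
      + (∑ i, if p ([CandA.d] ++ blistA (S i) ++ [CandA.c]) then 2*(k+1) else 0)
      + (∑ j, if p [CandA.d, CandA.b j, CandA.w] then 2 else 0)
      + (if p [CandA.d, CandA.w, CandA.c] then 2*(k+1) else 0) := by
  simp only [VA, ← Multiset.countP_eq_card_filter, Multiset.countP_add,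
    ← Multiset.coe_countPAddMonoidHom, map_sum]
  simp only [Multiset.coe_countPAddMonoidHom, Multiset.countP_replicate]

theorem card_VA (hn : 1 ≤ n) : Multiset.card (VA m n k S) = 3*(2*n*(k+1)) + 4*m + 11 := by
  have := card_filter_VA (m := m) (n := n) (k := k) (S := S) (fun _ => True)
  simp only [Multiset.filter_true, if_true, Finset.sum_const, Finset.card_univ,
    Fintype.card_fin, smul_eq_mul] at this
  rw [this]
  obtain ⟨n, rfl⟩ := Nat.exists_eq_add_of_le' hn
  simp only [Nat.add_sub_cancel]
  ring

theorem VA_block_arith (hn : 1 < n) :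
    2*n + 2*k*(n-1) + 2*k = 2*n*(k+1) ∧ 4*(k+1) ≤ 2*n*(k+1) := by
  obtain ⟨n, rfl⟩ := Nat.exists_eq_add_of_le' hn.le
  refine ⟨by simp only [Nat.add_sub_cancel]; ring, ?_⟩
  nlinarith

theorem levelScore_VA_b_le (C' : Finset (CandA m)) (i : ℕ) (j : Fin m) :
    levelScore (restrict C' (VA m n k S)) i (CandA.b j) ≤ 2*n*(k+1) + 2 := by
  refine (levelScore_restrict_le_apprScore _ _ _ _).trans ?_
  rw [apprScore, card_filter_VA]
  have := Fintype.sum_ite_le_card_mul (fun i => j ∈ S i) (2*(k+1))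
  simp only [Fintype.card_fin] at this
  simp only [List.mem_cons, reduceCtorEq, List.not_mem_nil, or_self, ↓reduceIte, add_zero, blistA,
    List.cons_append, List.nil_append, List.mem_append, List.mem_map, Finset.mem_sort,
    CandA.b.injEq, exists_eq_right, or_false, false_or, zero_add, Finset.sum_ite_eq,
    Finset.mem_univ]
  linarith

theorem levelScore_VA_d_le (C' : Finset (CandA m)) (i : ℕ) :
    levelScore (restrict C' (VA m n k S)) i CandA.d ≤ 2*n*(k+1) + 2*m + 2*(k+1) := by
  refine (levelScore_restrict_le_apprScore _ _ _ _).trans (le_of_eq ?_)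
  rw [apprScore, card_filter_VA]
  simp only [List.mem_cons, reduceCtorEq, List.not_mem_nil, or_self, ↓reduceIte, add_zero,
    List.cons_append, List.nil_append, List.mem_append, or_false, true_or, Finset.sum_const,
    Finset.card_univ, Fintype.card_fin, smul_eq_mul, zero_add]
  ring

theorem levelScore_VA_w_le (C' : Finset (CandA m)) (i : ℕ) :
    levelScore (restrict C' (VA m n k S)) i CandA.w
      ≤ (2*n + 2*k*(n-1) + 3) + (2*n*(k+1) + 5) + 2*m + 2*(k+1) := by
  refine (levelScore_restrict_le_apprScore _ _ _ _).trans (le_of_eq ?_)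
  rw [apprScore, card_filter_VA]
  simp only [List.mem_cons, reduceCtorEq, List.not_mem_nil, or_self, ↓reduceIte, or_false,
    or_true, zero_add, blistA, List.cons_append, List.nil_append, List.mem_append, List.mem_map,
    Finset.mem_sort, and_false, exists_false, Finset.sum_const_zero, add_zero, Finset.sum_const,
    Finset.card_univ, Fintype.card_fin, smul_eq_mul]
  ring

theorem levelScore_VA_one_w_le {C' : Finset (CandA m)} (hc : CandA.c ∈ C') :
    levelScore (restrict C' (VA m n k S)) 1 CandA.w
      ≤ (2*n*(k+1) + 5) + 2*m + 2*(k+1) := by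
  rw [levelScore_restrict, card_filter_VA]
  have := Fintype.sum_ite_le_card_mul (fun j : Fin m =>
    CandA.w ∈ ([CandA.d, CandA.b j, CandA.w].filter fun y => decide (y ∈ C')).take 1) 2
  simp only [Fintype.card_fin] at this
  simp only [hc, decide_true, List.filter_cons_of_pos, List.filter_nil, List.take_succ_cons,
    List.take_nil, List.mem_cons, reduceCtorEq, List.not_mem_nil, or_self, ↓reduceIte,
    List.take_zero, add_zero, zero_add, blistA, List.cons_append, List.nil_append,
    List.mem_append, List.mem_map, Finset.mem_sort, and_false, exists_false, not_false_eq_true,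
    List.not_mem_take_filter, Finset.sum_const_zero]
  split_ifs <;> omega

theorem levelScore_VA_one_c_le {C' : Finset (CandA m)} (hd : CandA.d ∈ C') (hw : CandA.w ∈ C') :
    levelScore (restrict C' (VA m n k S)) 1 CandA.c
      ≤ (2*m+1) + (2*n + 2*k*(n-1) + 3) := by
  rw [levelScore_restrict, card_filter_VA]
  simp only [hw, hd, decide_true, List.filter_cons_of_pos, List.take_succ_cons, List.take_zero,
    List.mem_cons, reduceCtorEq, List.not_mem_nil, or_self, ↓reduceIte, add_zero,
    List.cons_append, List.nil_append, List.filter_append, Finset.sum_const_zero]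
  split_ifs <;> omega

theorem le_levelScore_VA_one_c_of_w_not_mem {C' : Finset (CandA m)} (hc : CandA.c ∈ C')
    (hw : CandA.w ∉ C') :
    (2*m+1) + (2*n + 2*k*(n-1) + 3) + (2*n*(k+1) + 5)
      ≤ levelScore (restrict C' (VA m n k S)) 1 CandA.c := by
  rw [levelScore_restrict, card_filter_VA]
  simp only [hc, hw, decide_true, decide_false, Bool.false_eq_true, not_false_eq_true,
    List.filter_cons_of_pos, List.filter_cons_of_neg, List.filter_nil, List.take_succ_cons,
    List.take_nil, List.mem_cons, List.not_mem_nil, or_false, ↓reduceIte, List.cons_append,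
    List.nil_append]
  omega

theorem le_levelScore_VA_two_c_of_d_not_mem {C' : Finset (CandA m)} (hc : CandA.c ∈ C')
    (hw : CandA.w ∈ C') (hd : CandA.d ∉ C') :
    (2*m+1) + (2*n + 2*k*(n-1) + 3) + (2*n*(k+1) + 5) + 2*(k+1)
      ≤ levelScore (restrict C' (VA m n k S)) 2 CandA.c := by
  rw [levelScore_restrict, card_filter_VA]
  simp only [hc, hw, hd, decide_true, decide_false, Bool.false_eq_true, not_false_eq_true,
    List.filter_cons_of_pos, List.filter_cons_of_neg, List.filter_nil, List.filter_append,
    List.take_succ_cons, List.take_nil, List.mem_cons, List.not_mem_nil, or_false, ↓reduceIte,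
    reduceCtorEq, or_self, or_true, List.cons_append, List.nil_append]
  omega

theorem c_mem_take_two_filter_iff {C' : Finset (CandA m)} {T : Finset (Fin m)}
    (hc : CandA.c ∈ C') (hd : CandA.d ∈ C') :
    CandA.c ∈ (([CandA.d] ++ blistA T ++ [CandA.c]).filter fun y => decide (y ∈ C')).take 2
      ↔ ∀ j ∈ T, CandA.b j ∉ C' := by
  have hcL : CandA.c ∉ (blistA T).filter fun y => decide (y ∈ C') := by simp [blistA]
  rw [List.filter_append, List.filter_append]
  simp only [List.filter_singleton, hc, hd, decide_true, cond_true]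
  rw [List.singleton_append, List.cons_append, List.take_succ_cons, List.mem_cons]
  simp only [reduceCtorEq, false_or, List.mem_take_one_append_singleton_iff hcL,
    List.filter_eq_nil_iff]
  simp [blistA]

theorem w_mem_take_two_filter_iff {C' : Finset (CandA m)} (j : Fin m)
    (hd : CandA.d ∈ C') (hw : CandA.w ∈ C') :
    CandA.w ∈ ([CandA.d, CandA.b j, CandA.w].filter fun y => decide (y ∈ C')).take 2
      ↔ CandA.b j ∉ C' := by
  by_cases hb : CandA.b j ∈ C' <;> simp [hd, hw, hb]

theorem w_not_mem_take_filter_blistA (T : Finset (Fin m)) (p : CandA m → Bool) (i : ℕ) :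
    CandA.w ∉ (([CandA.d] ++ blistA T ++ [CandA.c]).filter p).take i :=
  List.not_mem_take_filter (by simp [blistA]) _ _

theorem levelScore_VA_two_c_image_union (B' : Finset (Fin m)) :
    levelScore (restrict (B'.image CandA.b ∪ {CandA.c, CandA.d, CandA.w}) (VA m n k S))
        2 CandA.c
      = (2*m+1) + (2*n + 2*k*(n-1) + 3) + (2*n*(k+1) + 5)
        + 2*(k+1) * (Finset.univ.filter fun i => Disjoint B' (S i)).card := by
  set C' := B'.image CandA.b ∪ {CandA.c, CandA.d, CandA.w} with hC'
  have hb : ∀ j, CandA.b j ∈ C' ↔ j ∈ B' := by simp [hC']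
  have hc : CandA.c ∈ C' := by simp [hC']
  have hd : CandA.d ∈ C' := by simp [hC']
  have hw : CandA.w ∈ C' := by simp [hC']
  clear_value C'
  rw [levelScore_restrict, card_filter_VA]
  simp only [c_mem_take_two_filter_iff hc hd, hb]
  rw [← Finset.sum_filter, Finset.sum_const, smul_eq_mul]
  simp only [hc, hd, hw, decide_true, List.filter_cons_of_pos, List.filter_nil,
    List.take_succ_cons, List.take_nil, List.take_zero, List.mem_cons, List.not_mem_nil,
    or_false, ↓reduceIte, reduceCtorEq, or_self, or_true, not_false_eq_true,
    List.not_mem_take_filter, Finset.sum_const_zero, add_zero, Finset.disjoint_right]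
  ring

-- Stated with `2 * B'.card` on the left to avoid truncated subtraction.
theorem levelScore_VA_two_w_image_union_add_card (B' : Finset (Fin m)) :
    levelScore (restrict (B'.image CandA.b ∪ {CandA.c, CandA.d, CandA.w}) (VA m n k S))
        2 CandA.w + 2 * B'.card
      = (2*n + 2*k*(n-1) + 3) + (2*n*(k+1) + 5) + 2*m + 2*(k+1) := by
  set C' := B'.image CandA.b ∪ {CandA.c, CandA.d, CandA.w} with hC'
  have hb : ∀ j, CandA.b j ∈ C' ↔ j ∈ B' := by simp [hC']
  have hc : CandA.c ∈ C' := by simp [hC']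
  have hd : CandA.d ∈ C' := by simp [hC']
  have hw : CandA.w ∈ C' := by simp [hC']
  clear_value C'
  rw [levelScore_restrict, card_filter_VA]
  simp only [w_mem_take_two_filter_iff _ hd hw, w_not_mem_take_filter_blistA, hb]
  have hB' : B'.card ≤ m := by simpa using B'.card_le_univ
  simp only [hc, hd, hw, decide_true, List.filter_cons_of_pos, List.filter_nil,
    List.take_succ_cons, List.take_nil, List.take_zero, List.mem_cons, reduceCtorEq,
    List.not_mem_nil, or_self, ↓reduceIte, or_false, or_true, zero_add, Finset.sum_const_zero,
    add_zero, ite_not, Finset.sum_ite, Finset.subset_univ, Finset.filter_mem_eq_of_subset,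
    Finset.filter_not, Finset.sum_const, Finset.card_sdiff, Finset.card_univ, Fintype.card_fin,
    Finset.inter_univ, smul_eq_mul]
  omega

theorem fwinners_VA_of_w_not_mem (hn : 1 < n) {C' : Finset (CandA m)} (hc : CandA.c ∈ C')
    (hw : CandA.w ∉ C') : fwinners C' (VA m n k S) = {CandA.c} := by
  obtain ⟨h₁, h₂⟩ := VA_block_arith (k := k) hn
  have hV := (card_restrict C' (VA m n k S)).trans (card_VA hn.le)
  have hc₁ := le_levelScore_VA_one_c_of_w_not_mem (k := k) (S := S) hc hw
  refine winners_eq_singleton_of_majority hc le_rfl (Finset.card_pos.2 ⟨_, hc⟩) (by omega)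
    ?_ (by omega)
  rintro (j | _ | _ | _) hy hyc
  · have := levelScore_VA_b_le (k := k) (S := S) C' 1 j; omega
  · exact absurd rfl hyc
  · have := levelScore_VA_d_le (k := k) (S := S) C' 1; omega
  · exact absurd hy hw

theorem fwinners_VA_of_d_not_mem (hn : 1 < n) {C' : Finset (CandA m)} (hc : CandA.c ∈ C')
    (hw : CandA.w ∈ C') (hd : CandA.d ∉ C') : fwinners C' (VA m n k S) = {CandA.c} := by
  obtain ⟨h₁, h₂⟩ := VA_block_arith (k := k) hn
  have hV := (card_restrict C' (VA m n k S)).trans (card_VA hn.le)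
  have hc₂ := le_levelScore_VA_two_c_of_d_not_mem (k := k) (S := S) hc hw hd
  refine winners_eq_singleton_of_majority hc one_le_two
    (Finset.one_lt_card.2 ⟨_, hc, _, hw, by simp⟩) (by omega) ?_ ?_
  · rintro (j | _ | _ | _) hy hyc
    · have := levelScore_VA_b_le (k := k) (S := S) C' 2 j; omega
    · exact absurd rfl hyc
    · exact absurd hy hd
    · have := levelScore_VA_w_le (k := k) (S := S) C' 2; omega
  · intro i hi₁ hi₂
    obtain rfl : i = 1 := by omega
    rintro (j | _ | _ | _) hy hyc
    · have := levelScore_VA_b_le (k := k) (S := S) C' 1 j; omega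
    · exact absurd rfl hyc
    · exact absurd hy hd
    · have := levelScore_VA_one_w_le (k := k) (S := S) hc; omega

theorem fwinners_VA_image_union_of_hitting (hn : 1 < n) {B' : Finset (Fin m)}
    (hhit : ∀ i, (B' ∩ S i).Nonempty) (hB' : B'.card ≤ k) :
    fwinners (B'.image CandA.b ∪ {CandA.c, CandA.d, CandA.w}) (VA m n k S) = {CandA.w} := by
  have hc₂ := levelScore_VA_two_c_image_union (k := k) (S := S) B'
  have hw₂ := levelScore_VA_two_w_image_union_add_card (k := k) (S := S) B'
  set C' := B'.image CandA.b ∪ {CandA.c, CandA.d, CandA.w}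
  obtain ⟨h₁, h₂⟩ := VA_block_arith (k := k) hn
  have hV := (card_restrict C' (VA m n k S)).trans (card_VA hn.le)
  have hunhit : (Finset.univ.filter fun i => Disjoint B' (S i)).card = 0 := by
    simpa [Finset.filter_eq_empty_iff, Finset.disjoint_iff_inter_eq_empty,
      ← Finset.nonempty_iff_ne_empty] using hhit
  rw [hunhit] at hc₂
  refine winners_eq_singleton_of_majority (by simp [C']) one_le_two
    (Finset.one_lt_card.2 ⟨CandA.c, by simp [C'], CandA.w, by simp [C'], by simp⟩)
    (by omega) ?_ ?_
  · rintro (j | _ | _ | _) _ hyw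
    · have := levelScore_VA_b_le (k := k) (S := S) C' 2 j; omega
    · omega
    · have := levelScore_VA_d_le (k := k) (S := S) C' 2; omega
    · exact absurd rfl hyw
  · intro i hi₁ hi₂
    obtain rfl : i = 1 := by omega
    rintro (j | _ | _ | _) _ hyw
    · have := levelScore_VA_b_le (k := k) (S := S) C' 1 j; omega
    · have := levelScore_VA_one_c_le (k := k) (S := S) (C' := C') (by simp [C']) (by simp [C'])
      omega
    · have := levelScore_VA_d_le (k := k) (S := S) C' 1; omega
    · exact absurd rfl hyw

theorem fwinners_VA_image_union_of_not_hitting (hn : 1 < n) {B' : Finset (Fin m)}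
    (hB' : (∃ i, ¬(B' ∩ S i).Nonempty) ∨ k < B'.card) :
    fwinners (B'.image CandA.b ∪ {CandA.c, CandA.d, CandA.w}) (VA m n k S) = {CandA.c} := by
  have hc₂ := levelScore_VA_two_c_image_union (k := k) (S := S) B'
  have hw₂ := levelScore_VA_two_w_image_union_add_card (k := k) (S := S) B'
  set C' := B'.image CandA.b ∪ {CandA.c, CandA.d, CandA.w}
  obtain ⟨h₁, h₂⟩ := VA_block_arith (k := k) hn
  have hV := (card_restrict C' (VA m n k S)).trans (card_VA hn.le)
  set u := (Finset.univ.filter fun i => Disjoint B' (S i)).card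
  have hcw : 2*k + 1 < 2 * B'.card + 2*(k+1) * u := by
    rcases hB' with ⟨i, hi⟩ | hk
    · have hu : 1 ≤ u := Finset.card_pos.2 ⟨i, by
        simpa [Finset.disjoint_iff_inter_eq_empty, Finset.not_nonempty_iff_eq_empty] using hi⟩
      have := Nat.mul_le_mul_left (2*(k+1)) hu
      omega
    · omega
  refine winners_eq_singleton_of_majority (by simp [C']) one_le_two
    (Finset.one_lt_card.2 ⟨CandA.c, by simp [C'], CandA.w, by simp [C'], by simp⟩)
    (by omega) ?_ ?_
  · rintro (j | _ | _ | _) _ hyc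
    · have := levelScore_VA_b_le (k := k) (S := S) C' 2 j; omega
    · exact absurd rfl hyc
    · have := levelScore_VA_d_le (k := k) (S := S) C' 2; omega
    · omega
  · intro i hi₁ hi₂
    obtain rfl : i = 1 := by omega
    rintro (j | _ | _ | _) _ hyc
    · have := levelScore_VA_b_le (k := k) (S := S) C' 1 j; omega
    · exact absurd rfl hyc
    · have := levelScore_VA_d_le (k := k) (S := S) C' 1; omega
    · have := levelScore_VA_one_w_le (k := k) (S := S) (C' := C') (by simp [C']); omega

theorem exists_eq_image_union {D : Finset (CandA m)}
    (hD : D ⊆ (Finset.univ : Finset (Fin m)).image CandA.b ∪ {CandA.d, CandA.w})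
    (hd : CandA.d ∈ D) (hw : CandA.w ∈ D) :
    ∃ B' : Finset (Fin m), D = B'.image CandA.b ∪ {CandA.d, CandA.w} := by
  refine ⟨Finset.univ.filter (CandA.b · ∈ D), Finset.ext fun x => ?_⟩
  have hc : CandA.c ∉ D := fun h => by simpa using hD h
  cases x <;> simp [hc, hd, hw]

end Construction1

theorem fv_construction1_key_lemma_general
    (m n k : ℕ) (S : Fin n → Finset (Fin m))
    (hn : 1 < n)
    (D : Finset (CandA m))
    (hD : D ⊆ (Finset.univ : Finset (Fin m)).image CandA.b ∪ {CandA.d, CandA.w})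
    (hc : FV.fwinners (insert CandA.c D) (VA m n k S) ≠ {CandA.c}) :
    ∃ B' : Finset (Fin m),
      D = B'.image CandA.b ∪ {CandA.d, CandA.w} ∧
      FV.fwinners (B'.image CandA.b ∪ {CandA.c, CandA.d, CandA.w}) (VA m n k S) = {CandA.w} ∧
      (∀ i, (B' ∩ S i).Nonempty) ∧ B'.card ≤ k := by
  have hcD : CandA.c ∈ insert CandA.c D := Finset.mem_insert_self _ _
  have hwD : CandA.w ∈ D := by
    by_contra hw
    exact hc (fwinners_VA_of_w_not_mem hn hcD (by simp [hw]))
  have hdD : CandA.d ∈ D := by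
    by_contra hd
    exact hc (fwinners_VA_of_d_not_mem hn hcD (Finset.mem_insert_of_mem hwD) (by simp [hd]))
  obtain ⟨B', rfl⟩ := exists_eq_image_union hD hdD hwD
  have hins : insert CandA.c (B'.image CandA.b ∪ {CandA.d, CandA.w})
      = B'.image CandA.b ∪ {CandA.c, CandA.d, CandA.w} := by
    ext; simp
  rw [hins] at hc
  by_cases hB' : (∀ i, (B' ∩ S i).Nonempty) ∧ B'.card ≤ k
  · exact ⟨B', rfl, fwinners_VA_image_union_of_hitting hn hB'.1 hB'.2, hB'⟩
  · rw [not_and_or, not_forall, not_le] at hB'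
    exact absurd (fwinners_VA_image_union_of_not_hitting hn hB') hc

/-- Let `(C,V)` be the election of Construction 1 from a Hitting Set instance
`(B,S,k)` (with `n > 1`, `0 < k < m`, and all `S_i` nonempty), and let
`D ⊆ B ∪ {d,w}`.  If `c` is not a unique FV winner of the restricted election
`(D ∪ {c}, V)`, then there is a set `B' ⊆ B` such that (a) `D = B' ∪ {d,w}`,
(b) `w` is the unique FV winner of `(B' ∪ {c,d,w}, V)`, and (c) `B'` is a
hitting set for `S` of size at most `k`. -/
theorem fv_construction1_key_lemma
    (m n k : ℕ) (S : Fin n → Finset (Fin m))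
    (hn : 1 < n) (hk : 0 < k) (hkm : k < m) (hS : ∀ i, (S i).Nonempty)
    (D : Finset (CandA m))
    (hD : D ⊆ (Finset.univ : Finset (Fin m)).image CandA.b ∪ {CandA.d, CandA.w})
    (hc : FV.fwinners (insert CandA.c D) (VA m n k S) ≠ {CandA.c}) :
    ∃ B' : Finset (Fin m),
      D = B'.image CandA.b ∪ {CandA.d, CandA.w} ∧
      FV.fwinners (B'.image CandA.b ∪ {CandA.c, CandA.d, CandA.w}) (VA m n k S) = {CandA.w} ∧
      (∀ i, (B' ∩ S i).Nonempty) ∧ B'.card ≤ k :=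
  fv_construction1_key_lemma_general m n k S hn D hD hc
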